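/- Under the unique-optimum assumption, the stability measures have the closed forms ζ_p = min_{1≤j≤n−m} s*_{m+j}/√(‖(B⁻¹N)_{·,j}‖² + 1) and ζ_d = min_{1≤i≤m} x*_i/√(‖(B⁻¹N)_{i,·}‖² + 1). -/

import Mathlib

/-
Once `B` is invertible, `Θ` is the unique optimal basis of `(A, b, c)` exactly when the basic
solution `B⁻¹b` and the reduced costs `c_N - (B⁻¹N)ᵀc_B` are strictly positive: then the basic
primal solution and its complementary dual solution are feasible, hence optimal, and strict
complementarity forces every other optimal solution to have the same support, hence to coincide.

Perturbing `c` by `Δc` shifts the `j`-th reduced cost by `⟪Δc, p_j⟫` with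
`p_j = (-(B⁻¹N)_{·,j}, e_j)`; perturbing `b` by `Δb = A q`, `q = Aᵀ(AAᵀ)⁻¹Δb`, shifts the `i`-th
basic value by `⟪q, g_i⟫` with `g_i = (e_i, (B⁻¹N)_{i,·})` the `i`-th row of `B⁻¹A`, and
`‖Δb‖_{(AAᵀ)⁻¹} = ‖q‖`. So both measures are the distance from `0` to a union of half-spaces
`{d | a_j + ⟪d, p_j⟫ ≤ 0}` (for `ζ_d` inside `range Aᵀ`, which contains every `g_i`). By
Cauchy–Schwarz that distance is `min_j a_j / ‖p_j‖`, attained at `d = -(a_j / ‖p_j‖²) p_j`, and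
`‖p_j‖² = ‖(B⁻¹N)_{·,j}‖² + 1`, `‖g_i‖² = ‖(B⁻¹N)_{i,·}‖² + 1`.
-/

open Matrix
open scoped BigOperators

noncomputable section

namespace LPPaper

/-- Euclidean norm of a finite real vector. -/
def enorm {k : ℕ} (v : Fin k → ℝ) : ℝ := Real.sqrt (∑ i, (v i) ^ 2)

/-- ℓ₁ norm of a finite real vector. -/
def l1 {k : ℕ} (v : Fin k → ℝ) : ℝ := ∑ i, |v i|

/-- Spectral norm (operator 2-norm w.r.t. Euclidean norms) of a real matrix. -/
def specNorm {α β : Type*} [Fintype α] [Fintype β] [DecidableEq β] (M : Matrix α β ℝ) : ℝ :=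
  ‖LinearMap.toContinuousLinearMap (Matrix.toEuclideanLin M)‖

variable {m n : ℕ}

/-- Embedding of basic indices (the first `m` coordinates). -/
def bIdx (hmn : m ≤ n) (i : Fin m) : Fin n := Fin.castLE hmn i

/-- Embedding of nonbasic indices (the last `n - m` coordinates). -/
def nIdx (hmn : m ≤ n) (j : Fin (n - m)) : Fin n := ⟨m + j.val, by have := j.isLt; omega⟩

/-- The basis matrix `B`: the first `m` columns of `A`. -/
def Bmat (hmn : m ≤ n) (A : Matrix (Fin m) (Fin n) ℝ) : Matrix (Fin m) (Fin m) ℝ :=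
  Matrix.of fun i j => A i (bIdx hmn j)

/-- The nonbasic matrix `N`: the last `n - m` columns of `A`. -/
def Nmat (hmn : m ≤ n) (A : Matrix (Fin m) (Fin n) ℝ) : Matrix (Fin m) (Fin (n - m)) ℝ :=
  Matrix.of fun i j => A i (nIdx hmn j)

/-- The simplex tableau `B⁻¹N` at the optimal basis. -/
def BN (hmn : m ≤ n) (A : Matrix (Fin m) (Fin n) ℝ) : Matrix (Fin m) (Fin (n - m)) ℝ :=
  (Bmat hmn A)⁻¹ * Nmat hmn A

/-- `q := Aᵀ(AAᵀ)⁻¹ b`. -/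
def qvec (A : Matrix (Fin m) (Fin n) ℝ) (b : Fin m → ℝ) : Fin n → ℝ :=
  Aᵀ *ᵥ ((A * Aᵀ)⁻¹ *ᵥ b)

/-- Primal feasibility: `Ax = b`, `x ≥ 0`. -/
def PrimalFeasible (A : Matrix (Fin m) (Fin n) ℝ) (b : Fin m → ℝ) (x : Fin n → ℝ) : Prop :=
  A *ᵥ x = b ∧ ∀ i, 0 ≤ x i

/-- Dual feasibility: `Aᵀy + s = c`, `s ≥ 0`. -/
def DualFeasible (A : Matrix (Fin m) (Fin n) ℝ) (c : Fin n → ℝ) (y : Fin m → ℝ)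
    (s : Fin n → ℝ) : Prop :=
  Aᵀ *ᵥ y + s = c ∧ ∀ i, 0 ≤ s i

/-- The unique-optimum assumption (Assumption 1 of the paper), with the optimal basis being
(after a permutation of the variables) the set of the first `m` indices: the rows of `A` are
linearly independent, `x*` is the unique primal optimal solution, `(y*, s*)` the unique dual
optimal solution, the basis matrix `B` is invertible, `x*ᵢ > 0` exactly for the first `m`
indices and `s*ᵢ > 0` exactly for the remaining indices. -/
structure UniqueOpt (hmn : m ≤ n) (A : Matrix (Fin m) (Fin n) ℝ) (b : Fin m → ℝ)
    (c : Fin n → ℝ) (xstar : Fin n → ℝ) (ystar : Fin m → ℝ) (sstar : Fin n → ℝ) : Prop where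
  rows_indep : LinearIndependent ℝ (fun i => A i)
  primal_feas : PrimalFeasible A b xstar
  primal_opt : ∀ x, PrimalFeasible A b x → c ⬝ᵥ xstar ≤ c ⬝ᵥ x
  primal_uniq : ∀ x, PrimalFeasible A b x → c ⬝ᵥ x = c ⬝ᵥ xstar → x = xstar
  dual_feas : DualFeasible A c ystar sstar
  dual_opt : ∀ y s, DualFeasible A c y s → b ⬝ᵥ y ≤ b ⬝ᵥ ystar
  dual_uniq : ∀ y s, DualFeasible A c y s → b ⬝ᵥ y = b ⬝ᵥ ystar → y = ystar ∧ s = sstar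
  basis_isUnit : IsUnit (Bmat hmn A).det
  xstar_supp : ∀ i : Fin n, 0 < xstar i ↔ (i : ℕ) < m
  sstar_supp : ∀ i : Fin n, 0 < sstar i ↔ m ≤ (i : ℕ)

/-- The `max` factor appearing in the geometric condition number `Φ`. -/
def PhiFactor (hmn : m ≤ n) (A : Matrix (Fin m) (Fin n) ℝ) (xstar sstar : Fin n → ℝ) : ℝ :=
  max (⨆ j : Fin (n - m),
        Real.sqrt ((∑ i, (BN hmn A i j) ^ 2) + 1) / sstar (nIdx hmn j))
      (⨆ i : Fin m,
        Real.sqrt ((∑ j, (BN hmn A i j) ^ 2) + 1) / xstar (bIdx hmn i))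

/-- The geometric condition number `Φ`. -/
def Phi (hmn : m ≤ n) (A : Matrix (Fin m) (Fin n) ℝ) (xstar sstar : Fin n → ℝ) : ℝ :=
  (l1 xstar + l1 sstar) * PhiFactor hmn A xstar sstar


/-- The first `m` indices form the unique optimal basis of the LP `(A, b, c)`:
there are (unique, nondegenerate) primal and dual optimal solutions whose supports are
exactly the first `m` indices and its complement, respectively. -/
def UniqueOptBasis (hmn : m ≤ n) (A : Matrix (Fin m) (Fin n) ℝ) (b : Fin m → ℝ)
    (c : Fin n → ℝ) : Prop :=
  ∃ x y s, UniqueOpt hmn A b c x y s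

/-- Stability of the optimal basis under perturbations of the cost vector `c`. -/
def zetaP (hmn : m ≤ n) (A : Matrix (Fin m) (Fin n) ℝ) (b : Fin m → ℝ) (c : Fin n → ℝ) : ℝ :=
  sInf {t | ∃ dc : Fin n → ℝ, t = enorm dc ∧ ¬ UniqueOptBasis hmn A b (c + dc)}

/-- Stability of the optimal basis under perturbations of the right-hand side `b`,
measured in the `(AAᵀ)⁻¹`-norm. -/
def zetaD (hmn : m ≤ n) (A : Matrix (Fin m) (Fin n) ℝ) (b : Fin m → ℝ) (c : Fin n → ℝ) : ℝ :=
  sInf {t | ∃ db : Fin m → ℝ, t = Real.sqrt (db ⬝ᵥ ((A * Aᵀ)⁻¹ *ᵥ db)) ∧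
    ¬ UniqueOptBasis hmn A (b + db) c}

end LPPaper

open scoped RealInnerProductSpace

section HalfSpaceDistance

variable {E : Type*} [NormedAddCommGroup E] [InnerProductSpace ℝ E]

theorem div_norm_le_norm_of_add_inner_nonpos {a : ℝ} {d p : E} (hp : p ≠ 0)
    (h : a + ⟪d, p⟫ ≤ 0) : a / ‖p‖ ≤ ‖d‖ := by
  rw [div_le_iff₀ (norm_pos_iff.mpr hp)]
  have := real_inner_le_norm (-d) p
  rw [inner_neg_left, norm_neg] at this
  linarith

theorem add_inner_smul_eq_zero_and_norm_smul_eq {a : ℝ} {p : E} (ha : 0 ≤ a) (hp : p ≠ 0) :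
    a + ⟪-(a / ‖p‖ ^ 2) • p, p⟫ = 0 ∧ ‖-(a / ‖p‖ ^ 2) • p‖ = a / ‖p‖ := by
  have hp' : ‖p‖ ≠ 0 := norm_ne_zero_iff.mpr hp
  constructor
  · rw [inner_smul_left, real_inner_self_eq_norm_sq, conj_trivial]
    field_simp
    ring
  · rw [norm_smul, norm_neg, Real.norm_of_nonneg (by positivity)]
    field_simp

theorem sInf_norm_setOf_exists_add_inner_nonpos {ι : Type*} [Fintype ι] (S : Submodule ℝ E)
    {a : ι → ℝ} {p : ι → E} (ha : ∀ j, 0 ≤ a j) (hp : ∀ j, p j ≠ 0) (hpS : ∀ j, p j ∈ S) :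
    sInf (norm '' {d | d ∈ S ∧ ∃ j, a j + ⟪d, p j⟫ ≤ 0}) = ⨅ j, a j / ‖p j‖ := by
  set T := norm '' {d | d ∈ S ∧ ∃ j, a j + ⟪d, p j⟫ ≤ 0}
  rcases isEmpty_or_nonempty ι with hι | hι
  · have hT : T = ∅ := by simp [T]
    rw [hT, Real.sInf_empty, Real.iInf_of_isEmpty]
  have lower : ∀ t ∈ T, ⨅ j, a j / ‖p j‖ ≤ t := by
    rintro _ ⟨d, ⟨-, j, hj⟩, rfl⟩
    exact (ciInf_le (Finite.bddBelow_range _) j).trans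
      (div_norm_le_norm_of_add_inner_nonpos (hp j) hj)
  have attained : ∀ j, a j / ‖p j‖ ∈ T := fun j =>
    have h := add_inner_smul_eq_zero_and_norm_smul_eq (ha j) (hp j)
    ⟨_, ⟨S.smul_mem _ (hpS j), j, h.1.le⟩, h.2⟩
  obtain ⟨j, hj⟩ := exists_eq_ciInf_of_finite (f := fun j => a j / ‖p j‖)
  refine le_antisymm ?_ (le_csInf ⟨_, attained j⟩ lower)
  exact hj ▸ csInf_le ⟨0, by rintro _ ⟨d, -, rfl⟩; exact norm_nonneg d⟩ (attained j)

end HalfSpaceDistance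

namespace Matrix

variable {m n R : Type*} [Fintype m] [Fintype n]

theorem nonsing_inv_mulVec_mulVec [DecidableEq m] [CommRing R] {M : Matrix m m R}
    (hM : IsUnit M.det) (v : m → R) : M⁻¹ *ᵥ (M *ᵥ v) = v := by
  rw [mulVec_mulVec, nonsing_inv_mul _ hM, one_mulVec]

theorem mulVec_nonsing_inv_mulVec [DecidableEq m] [CommRing R] {M : Matrix m m R}
    (hM : IsUnit M.det) (v : m → R) : M *ᵥ (M⁻¹ *ᵥ v) = v := by
  rw [mulVec_mulVec, mul_nonsing_inv _ hM, one_mulVec]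

theorem isUnit_mul_transpose_of_linearIndependent_rows [DecidableEq m] [Field R]
    [LinearOrder R] [IsStrictOrderedRing R] {A : Matrix m n R} (h : LinearIndependent R A.row) :
    IsUnit (A * Aᵀ) := by
  rw [← mulVec_injective_iff_isUnit, ← coe_mulVecLin, ← LinearMap.ker_eq_bot]
  have := ker_mulVecLin_transpose_mul_self Aᵀ
  rw [transpose_transpose] at this
  rw [this, LinearMap.ker_eq_bot, coe_mulVecLin,
    show Aᵀ.mulVec = A.vecMul from funext (mulVec_transpose A)]
  exact vecMul_injective_iff.mpr h

theorem dotProduct_eq_add_of_mulVec_eq [CommRing R] {A : Matrix m n R} {b : m → R}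
    {c x s : n → R} {y : m → R} (hx : A *ᵥ x = b) (hys : Aᵀ *ᵥ y + s = c) :
    c ⬝ᵥ x = b ⬝ᵥ y + s ⬝ᵥ x := by
  rw [← hys, add_dotProduct, ← hx, mulVec_transpose, ← dotProduct_mulVec, dotProduct_comm y]

theorem apply_eq_zero_of_dotProduct_eq_zero [Semiring R] [PartialOrder R] [IsOrderedRing R]
    [NoZeroDivisors R] {s x : n → R} (hs : ∀ k, 0 ≤ s k) (hx : ∀ k, 0 ≤ x k) (h : s ⬝ᵥ x = 0)
    {k : n} (hk : 0 < s k) : x k = 0 := by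
  have := (Finset.sum_eq_zero_iff_of_nonneg fun i _ => mul_nonneg (hs i) (hx i)).mp h k
    (Finset.mem_univ k)
  exact (mul_eq_zero.mp this).resolve_left hk.ne'

end Matrix

theorem EuclideanSpace.real_inner_toLp_toLp {ι : Type*} [Fintype ι] (u v : ι → ℝ) :
    ⟪WithLp.toLp 2 u, WithLp.toLp 2 v⟫ = u ⬝ᵥ v := by
  rw [EuclideanSpace.inner_toLp_toLp, star_trivial, dotProduct_comm]

namespace LPPaper

variable {m n : ℕ} (hmn : m ≤ n)

section Split

@[simp] lemma bIdx_val (i : Fin m) : (bIdx hmn i : ℕ) = i := rfl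

@[simp] lemma nIdx_val (j : Fin (n - m)) : (nIdx hmn j : ℕ) = m + j := rfl

def splitEquiv : Fin m ⊕ Fin (n - m) ≃ Fin n :=
  finSumFinEquiv.trans (finCongr (by omega))

@[simp] lemma splitEquiv_inl (i : Fin m) : splitEquiv hmn (Sum.inl i) = bIdx hmn i := by
  ext; simp [splitEquiv]

@[simp] lemma splitEquiv_inr (j : Fin (n - m)) : splitEquiv hmn (Sum.inr j) = nIdx hmn j := by
  ext; simp [splitEquiv]

lemma forall_fin_iff_forall_bIdx_and_forall_nIdx {P : Fin n → Prop} :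
    (∀ k, P k) ↔ (∀ i, P (bIdx hmn i)) ∧ ∀ j, P (nIdx hmn j) := by
  refine ⟨fun h => ⟨fun i => h _, fun j => h _⟩, fun ⟨hB, hN⟩ k => ?_⟩
  obtain ⟨i | j, rfl⟩ := (splitEquiv hmn).surjective k
  exacts [(splitEquiv_inl hmn i).symm ▸ hB i, (splitEquiv_inr hmn j).symm ▸ hN j]

lemma sum_fin_eq_sum_bIdx_add_sum_nIdx {M : Type*} [AddCommMonoid M] (f : Fin n → M) :
    ∑ k, f k = ∑ i, f (bIdx hmn i) + ∑ j, f (nIdx hmn j) := by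
  rw [← (splitEquiv hmn).sum_comp, Fintype.sum_sum_type]
  simp

def joinVec {α : Type*} (u : Fin m → α) (v : Fin (n - m) → α) : Fin n → α :=
  fun k => Sum.elim u v ((splitEquiv hmn).symm k)

variable {α : Type*} (u : Fin m → α) (v : Fin (n - m) → α)

@[simp] lemma joinVec_bIdx (i : Fin m) : joinVec hmn u v (bIdx hmn i) = u i := by
  rw [joinVec, ← splitEquiv_inl hmn, Equiv.symm_apply_apply, Sum.elim_inl]

@[simp] lemma joinVec_nIdx (j : Fin (n - m)) : joinVec hmn u v (nIdx hmn j) = v j := by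
  rw [joinVec, ← splitEquiv_inr hmn, Equiv.symm_apply_apply, Sum.elim_inr]

@[simp] lemma joinVec_comp_bIdx : joinVec hmn u v ∘ bIdx hmn = u :=
  funext (joinVec_bIdx hmn u v)

@[simp] lemma joinVec_comp_nIdx : joinVec hmn u v ∘ nIdx hmn = v :=
  funext (joinVec_nIdx hmn u v)

lemma eq_joinVec_iff (x : Fin n → α) :
    x = joinVec hmn u v ↔ x ∘ bIdx hmn = u ∧ x ∘ nIdx hmn = v := by
  rw [funext_iff, forall_fin_iff_forall_bIdx_and_forall_nIdx hmn]
  simp [funext_iff]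

lemma dotProduct_eq_comp_bIdx_add_comp_nIdx {R : Type*} [Mul R] [AddCommMonoid R]
    (x y : Fin n → R) :
    x ⬝ᵥ y = (x ∘ bIdx hmn) ⬝ᵥ (y ∘ bIdx hmn) + (x ∘ nIdx hmn) ⬝ᵥ (y ∘ nIdx hmn) :=
  sum_fin_eq_sum_bIdx_add_sum_nIdx hmn _

lemma sum_sq_joinVec {R : Type*} [CommSemiring R] (u : Fin m → R) (v : Fin (n - m) → R) :
    ∑ k, joinVec hmn u v k ^ 2 = ∑ i, u i ^ 2 + ∑ j, v j ^ 2 := by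
  simp [sum_fin_eq_sum_bIdx_add_sum_nIdx hmn]

end Split

section Basis

variable (A : Matrix (Fin m) (Fin n) ℝ)

def reducedCost (c : Fin n → ℝ) : Fin (n - m) → ℝ :=
  c ∘ nIdx hmn - (BN hmn A)ᵀ *ᵥ (c ∘ bIdx hmn)

/-- The direction of the simplex edge along which the nonbasic variable `j` enters the basis. -/
def edgeDir (j : Fin (n - m)) : Fin n → ℝ :=
  joinVec hmn (-(BN hmn A)ᵀ j) (Pi.single j 1)

def tableauRow (i : Fin m) : Fin n → ℝ :=
  joinVec hmn (Pi.single i 1) (BN hmn A i)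

lemma mulVec_eq_Bmat_mulVec_add_Nmat_mulVec (x : Fin n → ℝ) :
    A *ᵥ x = Bmat hmn A *ᵥ (x ∘ bIdx hmn) + Nmat hmn A *ᵥ (x ∘ nIdx hmn) :=
  funext fun i => dotProduct_eq_comp_bIdx_add_comp_nIdx hmn (A i) x

lemma transpose_mulVec_comp_bIdx (y : Fin m → ℝ) : (Aᵀ *ᵥ y) ∘ bIdx hmn = (Bmat hmn A)ᵀ *ᵥ y :=
  rfl

lemma transpose_mulVec_comp_nIdx (y : Fin m → ℝ) : (Aᵀ *ᵥ y) ∘ nIdx hmn = (Nmat hmn A)ᵀ *ᵥ y :=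
  rfl

lemma reducedCost_apply_eq_dotProduct_edgeDir (c : Fin n → ℝ) (j : Fin (n - m)) :
    reducedCost hmn A c j = c ⬝ᵥ edgeDir hmn A j := by
  rw [dotProduct_eq_comp_bIdx_add_comp_nIdx hmn, edgeDir, joinVec_comp_bIdx, joinVec_comp_nIdx,
    dotProduct_neg, dotProduct_single, mul_one, reducedCost, Pi.sub_apply, mulVec, dotProduct_comm]
  ring

lemma sum_sq_edgeDir (j : Fin (n - m)) :
    ∑ k, edgeDir hmn A j k ^ 2 = ∑ i, BN hmn A i j ^ 2 + 1 := by
  simp [edgeDir, sum_sq_joinVec, Pi.single_apply]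

lemma sum_sq_tableauRow (i : Fin m) :
    ∑ k, tableauRow hmn A i k ^ 2 = ∑ j, BN hmn A i j ^ 2 + 1 := by
  simp [tableauRow, sum_sq_joinVec, Pi.single_apply, add_comm]

variable {hmn A}

lemma transpose_mulVec_inv_Bmat_row (hB : IsUnit (Bmat hmn A).det) (i : Fin m) :
    Aᵀ *ᵥ (Bmat hmn A)⁻¹ i = tableauRow hmn A i := by
  rw [tableauRow, eq_joinVec_iff, transpose_mulVec_comp_bIdx, transpose_mulVec_comp_nIdx,
    mulVec_transpose, mulVec_transpose]
  refine ⟨?_, rfl⟩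
  change ((Bmat hmn A)⁻¹ * Bmat hmn A) i = _
  rw [nonsing_inv_mul _ hB]
  exact funext fun l => one_eq_pi_single

lemma inv_Bmat_mulVec_mulVec_apply (hB : IsUnit (Bmat hmn A).det) (w : Fin n → ℝ) (i : Fin m) :
    ((Bmat hmn A)⁻¹ *ᵥ (A *ᵥ w)) i = tableauRow hmn A i ⬝ᵥ w := by
  rw [← transpose_mulVec_inv_Bmat_row hB, mulVec_transpose, ← dotProduct_mulVec]
  rfl

lemma comp_bIdx_eq_of_mulVec_eq (hB : IsUnit (Bmat hmn A).det) {b : Fin m → ℝ} {x : Fin n → ℝ}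
    (hx : A *ᵥ x = b) (hxN : x ∘ nIdx hmn = 0) : x ∘ bIdx hmn = (Bmat hmn A)⁻¹ *ᵥ b := by
  rw [← hx, mulVec_eq_Bmat_mulVec_add_Nmat_mulVec hmn A x, hxN, mulVec_zero, add_zero,
    nonsing_inv_mulVec_mulVec hB]

lemma eq_of_transpose_mulVec_add_eq (hB : IsUnit (Bmat hmn A).det) {c s : Fin n → ℝ}
    {y : Fin m → ℝ} (hys : Aᵀ *ᵥ y + s = c) (hsB : s ∘ bIdx hmn = 0) :
    y = ((Bmat hmn A)ᵀ)⁻¹ *ᵥ (c ∘ bIdx hmn) := by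
  have hBy : (Bmat hmn A)ᵀ *ᵥ y = c ∘ bIdx hmn := by
    rw [← hys, ← transpose_mulVec_comp_bIdx, ← add_zero ((Aᵀ *ᵥ y) ∘ bIdx hmn), ← hsB]
    rfl
  rw [← hBy, nonsing_inv_mulVec_mulVec (by rwa [det_transpose])]

lemma comp_nIdx_eq_reducedCost (hB : IsUnit (Bmat hmn A).det) {c s : Fin n → ℝ}
    {y : Fin m → ℝ} (hys : Aᵀ *ᵥ y + s = c) (hsB : s ∘ bIdx hmn = 0) :
    s ∘ nIdx hmn = reducedCost hmn A c := by
  have hs : s = c - Aᵀ *ᵥ y := by rw [← hys]; abel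
  rw [reducedCost, hs, eq_of_transpose_mulVec_add_eq hB hys hsB, BN, transpose_mul,
    ← transpose_nonsing_inv, ← mulVec_mulVec]
  rfl

end Basis

section Norms

variable {A : Matrix (Fin m) (Fin n) ℝ}

lemma enorm_eq_norm_toLp {k : ℕ} (v : Fin k → ℝ) : enorm v = ‖WithLp.toLp 2 v‖ := by
  simp [enorm, EuclideanSpace.norm_eq]

lemma enorm_eq_sqrt_dotProduct {k : ℕ} (v : Fin k → ℝ) : enorm v = √(v ⬝ᵥ v) := by
  simp [enorm, dotProduct, sq]

lemma mulVec_qvec (hAA : IsUnit (A * Aᵀ).det) (db : Fin m → ℝ) : A *ᵥ qvec A db = db := by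
  rw [qvec, mulVec_mulVec, mulVec_nonsing_inv_mulVec hAA]

lemma qvec_mulVec_transpose_mulVec (hAA : IsUnit (A * Aᵀ).det) (z : Fin m → ℝ) :
    qvec A (A *ᵥ (Aᵀ *ᵥ z)) = Aᵀ *ᵥ z := by
  rw [qvec, mulVec_mulVec _ A, nonsing_inv_mulVec_mulVec hAA]

lemma qvec_dotProduct_qvec (hAA : IsUnit (A * Aᵀ).det) (db : Fin m → ℝ) :
    qvec A db ⬝ᵥ qvec A db = db ⬝ᵥ ((A * Aᵀ)⁻¹ *ᵥ db) := by
  nth_rw 1 [qvec]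
  rw [mulVec_transpose, ← dotProduct_mulVec, mulVec_qvec hAA, dotProduct_comm]

end Norms

section UniqueOptimum

variable {hmn} {A : Matrix (Fin m) (Fin n) ℝ} {b : Fin m → ℝ} {c : Fin n → ℝ}

lemma linearIndependent_rows_of_isUnit_det_Bmat (hB : IsUnit (Bmat hmn A).det) :
    LinearIndependent ℝ A.row :=
  LinearIndependent.of_comp (LinearMap.funLeft ℝ ℝ (bIdx hmn))
    (linearIndependent_rows_of_isUnit ((isUnit_iff_isUnit_det _).mpr hB))

lemma mulVec_joinVec_inv_Bmat_mulVec (hB : IsUnit (Bmat hmn A).det) :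
    A *ᵥ joinVec hmn ((Bmat hmn A)⁻¹ *ᵥ b) 0 = b := by
  rw [mulVec_eq_Bmat_mulVec_add_Nmat_mulVec hmn A, joinVec_comp_bIdx, joinVec_comp_nIdx,
    mulVec_zero, add_zero, mulVec_nonsing_inv_mulVec hB]

lemma transpose_mulVec_add_joinVec_reducedCost (hB : IsUnit (Bmat hmn A).det) :
    Aᵀ *ᵥ (((Bmat hmn A)ᵀ)⁻¹ *ᵥ (c ∘ bIdx hmn)) + joinVec hmn 0 (reducedCost hmn A c) = c := by
  set y := ((Bmat hmn A)ᵀ)⁻¹ *ᵥ (c ∘ bIdx hmn)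
  have hsB : (c - Aᵀ *ᵥ y) ∘ bIdx hmn = 0 := funext fun i => by
    change c (bIdx hmn i) - ((Bmat hmn A)ᵀ *ᵥ y) i = 0
    rw [mulVec_nonsing_inv_mulVec (by rwa [det_transpose]), Function.comp_apply, sub_self]
  have hys : Aᵀ *ᵥ y + (c - Aᵀ *ᵥ y) = c := add_sub_cancel _ _
  rwa [(eq_joinVec_iff hmn _ _ _).2 ⟨hsB, comp_nIdx_eq_reducedCost hB hys hsB⟩] at hys

lemma eq_joinVec_of_slack_dotProduct_eq_zero (hB : IsUnit (Bmat hmn A).det)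
    (hc : ∀ j, 0 < reducedCost hmn A c j) {x : Fin n → ℝ} (hx : A *ᵥ x = b) (hx0 : ∀ k, 0 ≤ x k)
    (hsx : joinVec hmn 0 (reducedCost hmn A c) ⬝ᵥ x = 0) :
    x = joinVec hmn ((Bmat hmn A)⁻¹ *ᵥ b) 0 := by
  have hs0 : ∀ k, 0 ≤ joinVec hmn 0 (reducedCost hmn A c) k :=
    (forall_fin_iff_forall_bIdx_and_forall_nIdx hmn).2 ⟨by simp, fun j => by simpa using (hc j).le⟩
  have hxN : x ∘ nIdx hmn = 0 := funext fun j =>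
    apply_eq_zero_of_dotProduct_eq_zero hs0 hx0 hsx (by simpa using hc j)
  exact (eq_joinVec_iff hmn _ _ x).2 ⟨comp_bIdx_eq_of_mulVec_eq hB hx hxN, hxN⟩

lemma eq_of_slack_dotProduct_joinVec_eq_zero (hB : IsUnit (Bmat hmn A).det)
    (hb : ∀ i, 0 < ((Bmat hmn A)⁻¹ *ᵥ b) i) {y : Fin m → ℝ} {s : Fin n → ℝ}
    (hys : Aᵀ *ᵥ y + s = c) (hs0 : ∀ k, 0 ≤ s k)
    (hsx : s ⬝ᵥ joinVec hmn ((Bmat hmn A)⁻¹ *ᵥ b) 0 = 0) :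
    y = ((Bmat hmn A)ᵀ)⁻¹ *ᵥ (c ∘ bIdx hmn) ∧ s = joinVec hmn 0 (reducedCost hmn A c) := by
  have hx0 : ∀ k, 0 ≤ joinVec hmn ((Bmat hmn A)⁻¹ *ᵥ b) 0 k :=
    (forall_fin_iff_forall_bIdx_and_forall_nIdx hmn).2 ⟨fun i => by simpa using (hb i).le, by simp⟩
  have hsB : s ∘ bIdx hmn = 0 := funext fun i =>
    apply_eq_zero_of_dotProduct_eq_zero hx0 hs0 (by rwa [dotProduct_comm]) (by simpa using hb i)
  exact ⟨eq_of_transpose_mulVec_add_eq hB hys hsB,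
    (eq_joinVec_iff hmn _ _ s).2 ⟨hsB, comp_nIdx_eq_reducedCost hB hys hsB⟩⟩

theorem uniqueOpt_of_pos (hB : IsUnit (Bmat hmn A).det) (hb : ∀ i, 0 < ((Bmat hmn A)⁻¹ *ᵥ b) i)
    (hc : ∀ j, 0 < reducedCost hmn A c j) :
    UniqueOpt hmn A b c (joinVec hmn ((Bmat hmn A)⁻¹ *ᵥ b) 0)
      (((Bmat hmn A)ᵀ)⁻¹ *ᵥ (c ∘ bIdx hmn)) (joinVec hmn 0 (reducedCost hmn A c)) := by
  set x := joinVec hmn ((Bmat hmn A)⁻¹ *ᵥ b) 0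
  set y := ((Bmat hmn A)ᵀ)⁻¹ *ᵥ (c ∘ bIdx hmn)
  set s := joinVec hmn 0 (reducedCost hmn A c)
  have hx : A *ᵥ x = b := mulVec_joinVec_inv_Bmat_mulVec hB
  have hys : Aᵀ *ᵥ y + s = c := transpose_mulVec_add_joinVec_reducedCost hB
  have hx0 : ∀ k, 0 ≤ x k :=
    (forall_fin_iff_forall_bIdx_and_forall_nIdx hmn).2 ⟨fun i => by simpa [x] using (hb i).le,
      fun j => by simp [x]⟩
  have hs0 : ∀ k, 0 ≤ s k :=
    (forall_fin_iff_forall_bIdx_and_forall_nIdx hmn).2 ⟨fun i => by simp [s],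
      fun j => by simpa [s] using (hc j).le⟩
  have hcx : c ⬝ᵥ x = b ⬝ᵥ y := by
    rw [dotProduct_eq_add_of_mulVec_eq hx hys, add_eq_left]
    simp [dotProduct_eq_comp_bIdx_add_comp_nIdx hmn, s, x]
  refine
    { rows_indep := linearIndependent_rows_of_isUnit_det_Bmat hB
      primal_feas := ⟨hx, hx0⟩
      primal_opt := fun x' ⟨hx', hx'0⟩ => by
        rw [hcx, dotProduct_eq_add_of_mulVec_eq hx' hys]
        linarith [dotProduct_nonneg_of_nonneg (v := s) (w := x') hs0 hx'0]
      primal_uniq := fun x' ⟨hx', hx'0⟩ hcost => eq_joinVec_of_slack_dotProduct_eq_zero hB hc hx'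
        hx'0 (by linarith [dotProduct_eq_add_of_mulVec_eq hx' hys])
      dual_feas := ⟨hys, hs0⟩
      dual_opt := fun y' s' ⟨hys', hs'0⟩ => by
        rw [← hcx, dotProduct_eq_add_of_mulVec_eq hx hys']
        linarith [dotProduct_nonneg_of_nonneg (v := s') (w := x) hs'0 hx0]
      dual_uniq := fun y' s' ⟨hys', hs'0⟩ hobj => eq_of_slack_dotProduct_joinVec_eq_zero hB hb
        hys' hs'0 (by linarith [dotProduct_eq_add_of_mulVec_eq hx hys'])
      basis_isUnit := hB
      xstar_supp := (forall_fin_iff_forall_bIdx_and_forall_nIdx hmn).2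
        ⟨fun i => by simp [x, hb i], fun j => by simp [x]⟩
      sstar_supp := (forall_fin_iff_forall_bIdx_and_forall_nIdx hmn).2
        ⟨fun i => by simp [s], fun j => by simp [s, hc j]⟩ }

variable {xstar : Fin n → ℝ} {ystar : Fin m → ℝ} {sstar : Fin n → ℝ}

lemma UniqueOpt.comp_nIdx_xstar (h : UniqueOpt hmn A b c xstar ystar sstar) :
    xstar ∘ nIdx hmn = 0 :=
  funext fun j => le_antisymm (not_lt.mp fun hpos => by simpa using (h.xstar_supp _).1 hpos)
    (h.primal_feas.2 _)

lemma UniqueOpt.comp_bIdx_sstar (h : UniqueOpt hmn A b c xstar ystar sstar) :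
    sstar ∘ bIdx hmn = 0 :=
  funext fun i => le_antisymm (not_lt.mp fun hpos => not_le.mpr i.isLt ((h.sstar_supp _).1 hpos))
    (h.dual_feas.2 _)

lemma UniqueOpt.comp_bIdx_xstar (h : UniqueOpt hmn A b c xstar ystar sstar) :
    xstar ∘ bIdx hmn = (Bmat hmn A)⁻¹ *ᵥ b :=
  comp_bIdx_eq_of_mulVec_eq h.basis_isUnit h.primal_feas.1 h.comp_nIdx_xstar

lemma UniqueOpt.comp_nIdx_sstar (h : UniqueOpt hmn A b c xstar ystar sstar) :
    sstar ∘ nIdx hmn = reducedCost hmn A c :=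
  comp_nIdx_eq_reducedCost h.basis_isUnit h.dual_feas.1 h.comp_bIdx_sstar

lemma UniqueOpt.xstar_bIdx_pos (h : UniqueOpt hmn A b c xstar ystar sstar) (i : Fin m) :
    0 < xstar (bIdx hmn i) :=
  (h.xstar_supp _).2 i.isLt

lemma UniqueOpt.sstar_nIdx_pos (h : UniqueOpt hmn A b c xstar ystar sstar) (j : Fin (n - m)) :
    0 < sstar (nIdx hmn j) :=
  (h.sstar_supp _).2 (by simp)

theorem uniqueOptBasis_iff (hB : IsUnit (Bmat hmn A).det) :
    UniqueOptBasis hmn A b c ↔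
      (∀ i, 0 < ((Bmat hmn A)⁻¹ *ᵥ b) i) ∧ ∀ j, 0 < reducedCost hmn A c j := by
  refine ⟨fun ⟨_, _, _, h⟩ => ⟨fun i => ?_, fun j => ?_⟩,
    fun ⟨hb, hc⟩ => ⟨_, _, _, uniqueOpt_of_pos hB hb hc⟩⟩
  · simpa [← h.comp_bIdx_xstar] using h.xstar_bIdx_pos i
  · simpa [← h.comp_nIdx_sstar] using h.sstar_nIdx_pos j

lemma UniqueOpt.not_uniqueOptBasis_add_cost_iff (h : UniqueOpt hmn A b c xstar ystar sstar)
    (dc : Fin n → ℝ) : ¬ UniqueOptBasis hmn A b (c + dc) ↔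
      ∃ j, sstar (nIdx hmn j) + dc ⬝ᵥ edgeDir hmn A j ≤ 0 := by
  have hb : ∀ i, 0 < ((Bmat hmn A)⁻¹ *ᵥ b) i :=
    ((uniqueOptBasis_iff h.basis_isUnit).1 ⟨_, _, _, h⟩).1
  simp only [uniqueOptBasis_iff h.basis_isUnit, hb, implies_true, true_and, not_forall, not_lt,
    reducedCost_apply_eq_dotProduct_edgeDir hmn A (c + dc), add_dotProduct,
    ← reducedCost_apply_eq_dotProduct_edgeDir hmn A c,
    ← h.comp_nIdx_sstar, Function.comp_apply]

lemma UniqueOpt.not_uniqueOptBasis_add_rhs_iff (h : UniqueOpt hmn A b c xstar ystar sstar)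
    (db : Fin m → ℝ) : ¬ UniqueOptBasis hmn A (b + db) c ↔
      ∃ i, xstar (bIdx hmn i) + ((Bmat hmn A)⁻¹ *ᵥ db) i ≤ 0 := by
  have hc : ∀ j, 0 < reducedCost hmn A c j :=
    ((uniqueOptBasis_iff h.basis_isUnit).1 ⟨_, _, _, h⟩).2
  simp only [uniqueOptBasis_iff h.basis_isUnit, hc, implies_true, and_true, not_forall, not_lt,
    mulVec_add, Pi.add_apply, ← h.comp_bIdx_xstar, Function.comp_apply]

theorem zetaP_eq_iInf (h : UniqueOpt hmn A b c xstar ystar sstar) :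
    zetaP hmn A b c = ⨅ j, sstar (nIdx hmn j) / √(∑ i, BN hmn A i j ^ 2 + 1) := by
  have hnorm (j) : ‖WithLp.toLp 2 (edgeDir hmn A j)‖ = √(∑ i, BN hmn A i j ^ 2 + 1) := by
    rw [← enorm_eq_norm_toLp, enorm, sum_sq_edgeDir]
  have hset : {t | ∃ dc, t = enorm dc ∧ ¬ UniqueOptBasis hmn A b (c + dc)} =
      norm '' {d | d ∈ (⊤ : Submodule ℝ (EuclideanSpace ℝ (Fin n))) ∧
        ∃ j, sstar (nIdx hmn j) + ⟪d, WithLp.toLp 2 (edgeDir hmn A j)⟫ ≤ 0} := by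
    ext t
    constructor
    · rintro ⟨dc, rfl, hdc⟩
      refine ⟨WithLp.toLp 2 dc, ⟨trivial, ?_⟩, (enorm_eq_norm_toLp dc).symm⟩
      simpa [EuclideanSpace.real_inner_toLp_toLp] using (h.not_uniqueOptBasis_add_cost_iff dc).1 hdc
    · rintro ⟨d, ⟨-, hd⟩, rfl⟩
      refine ⟨WithLp.ofLp d, by rw [enorm_eq_norm_toLp, WithLp.toLp_ofLp], ?_⟩
      rw [h.not_uniqueOptBasis_add_cost_iff]
      simpa [← EuclideanSpace.real_inner_toLp_toLp] using hd
  rw [zetaP, hset, sInf_norm_setOf_exists_add_inner_nonpos ⊤ (fun j => (h.sstar_nIdx_pos j).le)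
    (fun j => norm_ne_zero_iff.mp (by rw [hnorm]; positivity)) (fun _ => trivial)]
  simp_rw [hnorm]

theorem zetaD_eq_iInf (h : UniqueOpt hmn A b c xstar ystar sstar) :
    zetaD hmn A b c = ⨅ i, xstar (bIdx hmn i) / √(∑ j, BN hmn A i j ^ 2 + 1) := by
  have hB := h.basis_isUnit
  have hAA : IsUnit (A * Aᵀ).det :=
    (isUnit_iff_isUnit_det _).mp (isUnit_mul_transpose_of_linearIndependent_rows h.rows_indep)
  have hnorm (i) : ‖WithLp.toLp 2 (tableauRow hmn A i)‖ = √(∑ j, BN hmn A i j ^ 2 + 1) := by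
    rw [← enorm_eq_norm_toLp, enorm, sum_sq_tableauRow]
  let S : Submodule ℝ (EuclideanSpace ℝ (Fin n)) :=
    LinearMap.range ((WithLp.linearEquiv 2 ℝ (Fin n → ℝ)).symm.toLinearMap ∘ₗ Aᵀ.mulVecLin)
  have hset : {t | ∃ db, t = √(db ⬝ᵥ ((A * Aᵀ)⁻¹ *ᵥ db)) ∧ ¬ UniqueOptBasis hmn A (b + db) c} =
      norm '' {d | d ∈ S ∧
        ∃ i, xstar (bIdx hmn i) + ⟪d, WithLp.toLp 2 (tableauRow hmn A i)⟫ ≤ 0} := by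
    ext t
    constructor
    · rintro ⟨db, rfl, hdb⟩
      obtain ⟨i, hi⟩ := (h.not_uniqueOptBasis_add_rhs_iff db).1 hdb
      refine ⟨WithLp.toLp 2 (qvec A db), ⟨⟨(A * Aᵀ)⁻¹ *ᵥ db, rfl⟩, i, ?_⟩, ?_⟩
      · rwa [EuclideanSpace.real_inner_toLp_toLp, dotProduct_comm,
          ← inv_Bmat_mulVec_mulVec_apply hB, mulVec_qvec hAA]
      · rw [← enorm_eq_norm_toLp, enorm_eq_sqrt_dotProduct, qvec_dotProduct_qvec hAA]
    · rintro ⟨_, ⟨⟨z, rfl⟩, i, hi⟩, rfl⟩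
      refine ⟨A *ᵥ (Aᵀ *ᵥ z), ?_, (h.not_uniqueOptBasis_add_rhs_iff _).2 ⟨i, ?_⟩⟩
      · rw [← qvec_dotProduct_qvec hAA, qvec_mulVec_transpose_mulVec hAA,
          ← enorm_eq_sqrt_dotProduct, enorm_eq_norm_toLp]
        rfl
      · change _ + ⟪WithLp.toLp 2 (Aᵀ *ᵥ z), _⟫ ≤ 0 at hi
        rwa [inv_Bmat_mulVec_mulVec_apply hB, dotProduct_comm,
          ← EuclideanSpace.real_inner_toLp_toLp]
  rw [zetaD, hset, sInf_norm_setOf_exists_add_inner_nonpos S (fun i => (h.xstar_bIdx_pos i).le)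
    (fun i => norm_ne_zero_iff.mp (by rw [hnorm]; positivity))
    (fun i => ⟨_, congrArg (WithLp.toLp 2) (transpose_mulVec_inv_Bmat_row hB i)⟩)]
  simp_rw [hnorm]

end UniqueOptimum

/-- Lemma 13 of the paper. Under the unique-optimum assumption, the
stability measures have the closed forms
`ζ_p = min_j s*_{m+j}/√(‖(B⁻¹N)_{·,j}‖²+1)` and `ζ_d = min_i x*_i/√(‖(B⁻¹N)_{i,·}‖²+1)`. -/
theorem zetaP_zetaD_closed_form (m n : ℕ) (hmn : m ≤ n)
    (A : Matrix (Fin m) (Fin n) ℝ) (b : Fin m → ℝ) (c : Fin n → ℝ)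
    (xstar : Fin n → ℝ) (ystar : Fin m → ℝ) (sstar : Fin n → ℝ)
    (h : UniqueOpt hmn A b c xstar ystar sstar) :
    zetaP hmn A b c =
      (⨅ j : Fin (n - m), sstar (nIdx hmn j) / Real.sqrt ((∑ i, (BN hmn A i j) ^ 2) + 1)) ∧
    zetaD hmn A b c =
      (⨅ i : Fin m, xstar (bIdx hmn i) / Real.sqrt ((∑ j, (BN hmn A i j) ^ 2) + 1)) :=
  ⟨zetaP_eq_iInf h, zetaD_eq_iInf h⟩

end LPPaper
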